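/- Let A be an (N+1)×(N+1) lower unitriangular matrix with inverse B, where N + 1 = n + m, and extend A, B by zero outside indices 0..N. Define A° by A°_{ij} = A_{ij} − A_{i, 2n−j} for j < n and A°_{ij} = A_{ij} for j ≥ n, and define B^× by B^×_{ij} = B_{ij} + B_{2n−i, j} for i > n and B^×_{ij} = B_{ij} for i ≤ n. Then A° B^× is the identity matrix. -/
import Mathlib


/-- Extension of a matrix indexed by `Fin N` to all integer indices, by zero. -/
def extByZero {N : ℕ} {R : Type*} [CommRing R] (A : Matrix (Fin N) (Fin N) R) :
    ℤ → ℤ → R := fun i j =>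
  if h : 0 ≤ i ∧ i < (N : ℤ) ∧ 0 ≤ j ∧ j < (N : ℤ) then
    A ⟨i.toNat, by omega⟩ ⟨j.toNat, by omega⟩ else 0

lemma extByZero_eq {N : ℕ} {R : Type*} [CommRing R] (A : Matrix (Fin N) (Fin N) R)
    (a b : ℤ) (h : 0 ≤ a ∧ a < (N : ℤ) ∧ 0 ≤ b ∧ b < (N : ℤ)) :
    extByZero A a b = A ⟨a.toNat, by omega⟩ ⟨b.toNat, by omega⟩ := dif_pos h

lemma extByZero_zero {N : ℕ} {R : Type*} [CommRing R] (A : Matrix (Fin N) (Fin N) R)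
    (a b : ℤ) (h : ¬(0 ≤ a ∧ a < (N : ℤ) ∧ 0 ≤ b ∧ b < (N : ℤ))) :
    extByZero A a b = 0 := dif_neg h

lemma extByZero_coe {N : ℕ} {R : Type*} [CommRing R] (A : Matrix (Fin N) (Fin N) R)
    (a b : Fin N) : extByZero A (a : ℤ) (b : ℤ) = A a b := by
  have ha := a.isLt; have hb := b.isLt
  rw [extByZero_eq A _ _ (by omega)]
  simp

/-- Let `A` be a lower unitriangular `(N+1)×(N+1)` matrix with inverse `B`, where
`N + 1 = n + m`, both extended by zero outside the index range. Define
`A°_{ij} = A_{ij} − A_{i,2n−j}` for `j < n` and `A°_{ij} = A_{ij}` otherwise, and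
`B^×_{ij} = B_{ij} + B_{2n−i,j}` for `i > n` and `B^×_{ij} = B_{ij}` otherwise.
Then `A° B^× = 1`. -/
theorem Acirc_mul_Btimes {R : Type*} [CommRing R] (n m : ℕ)
    (A B : Matrix (Fin (n + m)) (Fin (n + m)) R)
    (hA_tri : ∀ i j : Fin (n + m), (i : ℕ) < (j : ℕ) → A i j = 0)
    (hA_diag : ∀ i : Fin (n + m), A i i = 1)
    (hAB : A * B = 1) (hBA : B * A = 1) :
    (Matrix.of fun i j : Fin (n + m) =>
        if (j : ℤ) < (n : ℤ) then A i j - extByZero A (i : ℤ) (2 * (n : ℤ) - (j : ℤ))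
        else A i j) *
      (Matrix.of fun i j : Fin (n + m) =>
        if (n : ℤ) < (i : ℤ) then B i j + extByZero B (2 * (n : ℤ) - (i : ℤ)) (j : ℤ)
        else B i j) = 1 := by
  ext i k
  rw [Matrix.mul_apply]
  simp only [Matrix.of_apply]
  have hsplit : ∀ j : Fin (n + m),
      ((if (j : ℤ) < (n : ℤ) then A i j - extByZero A (i : ℤ) (2 * (n : ℤ) - (j : ℤ))
          else A i j) *
        (if (n : ℤ) < (j : ℤ) then B j k + extByZero B (2 * (n : ℤ) - (j : ℤ)) (k : ℤ)
          else B j k))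
      = A i j * B j k
        + (if (n : ℤ) < (j : ℤ) then A i j * extByZero B (2 * (n : ℤ) - (j : ℤ)) (k : ℤ) else 0)
        - (if (j : ℤ) < (n : ℤ) then
            extByZero A (i : ℤ) (2 * (n : ℤ) - (j : ℤ)) * B j k else 0) := by
    intro j
    split_ifs with h1 h2 h2
    · omega
    · ring
    · ring
    · ring
  rw [Finset.sum_congr rfl fun j _ => hsplit j]
  rw [Finset.sum_sub_distrib, Finset.sum_add_distrib]
  have hone : ∑ j, A i j * B j k = (1 : Matrix (Fin (n + m)) (Fin (n + m)) R) i k := by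
    rw [← Matrix.mul_apply, hAB]
  rw [hone]
  have core :
      (∑ j : Fin (n + m),
        if (j : ℤ) < (n : ℤ) then extByZero A (i : ℤ) (2 * (n : ℤ) - (j : ℤ)) * B j k else 0)
      = ∑ j : Fin (n + m),
        if (n : ℤ) < (j : ℤ) then A i j * extByZero B (2 * (n : ℤ) - (j : ℤ)) (k : ℤ) else 0 := by
    rw [← Finset.sum_filter, ← Finset.sum_filter]
    have hL :
        (∑ j ∈ Finset.univ.filter (fun j : Fin (n + m) => (j : ℤ) < (n : ℤ)),
          extByZero A (i : ℤ) (2 * (n : ℤ) - (j : ℤ)) * B j k)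
        = ∑ j ∈ Finset.univ.filter
            (fun j : Fin (n + m) => (j : ℤ) < (n : ℤ) ∧ (n : ℤ) < (m : ℤ) + (j : ℤ)),
          extByZero A (i : ℤ) (2 * (n : ℤ) - (j : ℤ)) * B j k := by
      symm
      apply Finset.sum_subset
      · intro j hj
        simp only [Finset.mem_filter, Finset.mem_univ, true_and] at hj ⊢
        exact hj.1
      · intro j hj hj'
        simp only [Finset.mem_filter, Finset.mem_univ, true_and] at hj hj'
        have : ¬((n : ℤ) < (m : ℤ) + (j : ℤ)) := fun h => hj' ⟨hj, h⟩
        rw [extByZero_zero A _ _ (by push_cast; omega), zero_mul]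
    have hR :
        (∑ j ∈ Finset.univ.filter (fun j : Fin (n + m) => (n : ℤ) < (j : ℤ)),
          A i j * extByZero B (2 * (n : ℤ) - (j : ℤ)) (k : ℤ))
        = ∑ j ∈ Finset.univ.filter
            (fun j : Fin (n + m) => (n : ℤ) < (j : ℤ) ∧ (j : ℤ) ≤ 2 * (n : ℤ)),
          A i j * extByZero B (2 * (n : ℤ) - (j : ℤ)) (k : ℤ) := by
      symm
      apply Finset.sum_subset
      · intro j hj
        simp only [Finset.mem_filter, Finset.mem_univ, true_and] at hj ⊢
        exact hj.1
      · intro j hj hj'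
        simp only [Finset.mem_filter, Finset.mem_univ, true_and] at hj hj'
        have : ¬((j : ℤ) ≤ 2 * (n : ℤ)) := fun h => hj' ⟨hj, h⟩
        rw [extByZero_zero B _ _ (by push_cast; omega), mul_zero]
    rw [hL, hR]
    refine Finset.sum_bij'
      (i := fun (j : Fin (n + m)) (hj : j ∈ Finset.univ.filter
        (fun j : Fin (n + m) => (j : ℤ) < (n : ℤ) ∧ (n : ℤ) < (m : ℤ) + (j : ℤ))) =>
        (⟨2 * n - (j : ℕ), by
          simp only [Finset.mem_filter, Finset.mem_univ, true_and] at hj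
          have := j.isLt
          omega⟩ : Fin (n + m)))
      (j := fun (j : Fin (n + m)) (hj : j ∈ Finset.univ.filter
        (fun j : Fin (n + m) => (n : ℤ) < (j : ℤ) ∧ (j : ℤ) ≤ 2 * (n : ℤ))) =>
        (⟨2 * n - (j : ℕ), by
          simp only [Finset.mem_filter, Finset.mem_univ, true_and] at hj
          have := j.isLt
          omega⟩ : Fin (n + m)))
      ?_ ?_ ?_ ?_ ?_
    · intro j hj
      simp only [Finset.mem_filter, Finset.mem_univ, true_and] at hj ⊢
      push_cast
      omega
    · intro j hj
      simp only [Finset.mem_filter, Finset.mem_univ, true_and] at hj ⊢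
      push_cast
      have := j.isLt
      omega
    · intro j hj
      simp only [Finset.mem_filter, Finset.mem_univ, true_and] at hj
      ext
      simp only
      omega
    · intro j hj
      simp only [Finset.mem_filter, Finset.mem_univ, true_and] at hj
      ext
      simp only
      have := j.isLt
      omega
    · intro j hj
      simp only [Finset.mem_filter, Finset.mem_univ, true_and] at hj
      have hjlt := j.isLt
      have hq : 2 * n - (j : ℕ) < n + m := by omega
      have hv : ((⟨2 * n - (j : ℕ), hq⟩ : Fin (n + m)) : ℕ) = 2 * n - (j : ℕ) := rfl
      have e1 : 2 * (n : ℤ) - ((j : ℕ) : ℤ)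
          = (((⟨2 * n - (j : ℕ), hq⟩ : Fin (n + m)) : ℕ) : ℤ) := by omega
      have e2 : 2 * (n : ℤ) - ((((⟨2 * n - (j : ℕ), hq⟩ : Fin (n + m)) : ℕ)) : ℤ)
          = ((j : ℕ) : ℤ) := by omega
      calc extByZero A ((i : ℕ) : ℤ) (2 * (n : ℤ) - ((j : ℕ) : ℤ)) * B j k
          = A i (⟨2 * n - (j : ℕ), hq⟩ : Fin (n + m)) * B j k := by
            rw [e1, extByZero_coe]
        _ = A i (⟨2 * n - (j : ℕ), hq⟩ : Fin (n + m)) *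
              extByZero B (2 * (n : ℤ) - ((((⟨2 * n - (j : ℕ), hq⟩ : Fin (n + m)) : ℕ)) : ℤ))
                ((k : ℕ) : ℤ) := by
            rw [e2, extByZero_coe]
  rw [core]
  exact add_sub_cancel_right _ _
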